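/- The worst-case NSNR equals the closed-form expression NSNR_min(C, Ĉ) = inf_{s ≠ 0} NSNR(s) = 4κ(Q)/(κ(Q)+1)², and the infimum is attained. -/

import Mathlib

open Matrix

section Aux

variable {D : ℕ}

/-- quadratic form of `U * diagonal d * star U`. -/
lemma quadForm_conj_diag (U : Matrix (Fin D) (Fin D) ℝ) (d t : Fin D → ℝ) :
    t ⬝ᵥ (U * diagonal d * star U) *ᵥ t = ∑ i, d i * (star U *ᵥ t) i ^ 2 := by
  rw [← mulVec_mulVec, ← mulVec_mulVec, dotProduct_mulVec]
  have h1 : t ᵥ* U = star U *ᵥ t := by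
    rw [star_eq_conjTranspose, conjTranspose_eq_transpose_of_trivial, mulVec_transpose]
  rw [h1]
  simp only [dotProduct, mulVec_diagonal]
  exact Finset.sum_congr rfl fun i _ => by ring

lemma dot_self_conj (U : Matrix (Fin D) (Fin D) ℝ) (hU : U * star U = 1) (t : Fin D → ℝ) :
    t ⬝ᵥ t = ∑ i, (star U *ᵥ t) i ^ 2 := by
  have h0 : t ⬝ᵥ t = t ⬝ᵥ (U * star U) *ᵥ t := by rw [hU, one_mulVec]
  rw [h0, ← mulVec_mulVec, dotProduct_mulVec]
  have h1 : t ᵥ* U = star U *ᵥ t := by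
    rw [star_eq_conjTranspose, conjTranspose_eq_transpose_of_trivial, mulVec_transpose]
  rw [h1]
  simp only [dotProduct]
  exact Finset.sum_congr rfl fun i _ => (sq _).symm

lemma vecMul_symm (A : Matrix (Fin D) (Fin D) ℝ) (hA : Aᵀ = A) (x : Fin D → ℝ) :
    x ᵥ* A = A *ᵥ x := by
  rw [← mulVec_transpose, hA]

lemma sum_single_sq (f : Fin D → ℝ) (i₀ : Fin D) :
    ∑ i, f i * ((Pi.single i₀ (1:ℝ) : Fin D → ℝ) i) ^ 2 = f i₀ := by
  simp [Pi.single_apply]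

lemma sum_two_sq (f : Fin D → ℝ) {i₀ j₀ : Fin D} (hij : i₀ ≠ j₀) :
    ∑ i, f i * (((Pi.single i₀ (1:ℝ) : Fin D → ℝ) + (Pi.single j₀ (1:ℝ) : Fin D → ℝ)) i) ^ 2
      = f i₀ + f j₀ := by
  have : ∀ i, f i * (((Pi.single i₀ (1:ℝ) : Fin D → ℝ) + (Pi.single j₀ (1:ℝ) : Fin D → ℝ)) i) ^ 2
      = f i * ((Pi.single i₀ (1:ℝ) : Fin D → ℝ) i) ^ 2
        + f i * ((Pi.single j₀ (1:ℝ) : Fin D → ℝ) i) ^ 2 := by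
    intro i
    rcases eq_or_ne i i₀ with rfl | h1 <;> rcases eq_or_ne i j₀ with rfl | h2 <;>
      simp_all [Pi.single_apply]
  rw [Finset.sum_congr rfl fun i _ => this i, Finset.sum_add_distrib,
    sum_single_sq, sum_single_sq]

lemma kantorovich_aux {ι : Type*} [Fintype ι] (l w : ι → ℝ) (m M : ℝ)
    (hm : 0 < m) (hM : 0 < M)
    (hw : ∀ i, 0 ≤ w i) (hl1 : ∀ i, m ≤ l i) (hl2 : ∀ i, l i ≤ M) :
    (∑ i, l i * w i) * (∑ i, (l i)⁻¹ * w i) ≤ (∑ i, w i) ^ 2 * (m + M) ^ 2 / (4 * m * M) := by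
  set S := ∑ i, w i with hS
  set A := ∑ i, l i * w i with hA
  set B := ∑ i, (l i)⁻¹ * w i with hB
  have hA0 : 0 ≤ A := Finset.sum_nonneg fun i _ => mul_nonneg (le_trans hm.le (hl1 i)) (hw i)
  have hkey : m * M * B ≤ (m + M) * S - A := by
    have hterm : ∀ i, m * M * ((l i)⁻¹ * w i) ≤ (m + M) * w i - l i * w i := by
      intro i
      have hli : 0 < l i := lt_of_lt_of_le hm (hl1 i)
      have h1 : 0 ≤ (l i - m) * (M - l i) * w i :=
        mul_nonneg (mul_nonneg (by linarith [hl1 i]) (by linarith [hl2 i])) (hw i)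
      have h2 : m * M * ((l i)⁻¹ * w i) = (m * M * w i) / l i := by field_simp
      rw [h2, div_le_iff₀ hli]
      nlinarith [h1]
    calc m * M * B = ∑ i, m * M * ((l i)⁻¹ * w i) := by rw [hB, Finset.mul_sum]
    _ ≤ ∑ i, ((m + M) * w i - l i * w i) := Finset.sum_le_sum fun i _ => hterm i
    _ = (m + M) * S - A := by rw [Finset.sum_sub_distrib, hS, hA, Finset.mul_sum]
  rw [le_div_iff₀ (by positivity)]
  nlinarith [mul_le_mul_of_nonneg_left hkey hA0, sq_nonneg ((m + M) * S - 2 * A)]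

end Aux


/-- Normalized signal-to-noise ratio of target vector `s` for true covariance `C`
and estimated covariance `Ch`:
`NSNR(s) = (sᵀ Ĉ⁻¹ s)² / ((sᵀ Ĉ⁻¹ C Ĉ⁻¹ s)(sᵀ C⁻¹ s))`. -/
noncomputable def NSNR {D : ℕ} (C Ch : Matrix (Fin D) (Fin D) ℝ) (s : Fin D → ℝ) : ℝ :=
  (s ⬝ᵥ Ch⁻¹ *ᵥ s) ^ 2 / ((s ⬝ᵥ (Ch⁻¹ * C * Ch⁻¹) *ᵥ s) * (s ⬝ᵥ C⁻¹ *ᵥ s))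

/-- Worst-case NSNR: the infimum of `NSNR` over nonzero target vectors. -/
noncomputable def NSNRmin {D : ℕ} (C Ch : Matrix (Fin D) (Fin D) ℝ) : ℝ :=
  ⨅ s : {s : Fin D → ℝ // s ≠ 0}, NSNR C Ch s.1

/-- The square root of a positive semi-definite matrix, as defined in Mathlib of December 2024
(`Matrix.PosSemidef.sqrt`, since removed from Mathlib). -/
noncomputable def Matrix.PosSemidef.sqrt {n : Type*} [Fintype n] [DecidableEq n]
    {A : Matrix n n ℝ} (hA : A.PosSemidef) : Matrix n n ℝ :=
  hA.1.eigenvectorUnitary.1 * diagonal ((↑) ∘ (√·) ∘ hA.1.eigenvalues) *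
    (star hA.1.eigenvectorUnitary : Matrix n n ℝ)

lemma aux_sqrt_posSemidef {n : Type*} [Fintype n] [DecidableEq n]
    {A : Matrix n n ℝ} (hA : A.PosSemidef) : hA.sqrt.PosSemidef := by
  unfold Matrix.PosSemidef.sqrt
  have hd : (diagonal ((↑) ∘ (√·) ∘ hA.1.eigenvalues) : Matrix n n ℝ).PosSemidef := by
    rw [posSemidef_diagonal_iff]
    intro i
    simp [Real.sqrt_nonneg]
  have := hd.mul_mul_conjTranspose_same (hA.1.eigenvectorUnitary.1)
  rwa [← star_eq_conjTranspose] at this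

lemma aux_sqrt_mul_self {n : Type*} [Fintype n] [DecidableEq n]
    {A : Matrix n n ℝ} (hA : A.PosSemidef) : hA.sqrt * hA.sqrt = A := by
  unfold Matrix.PosSemidef.sqrt
  set U : Matrix n n ℝ := hA.1.eigenvectorUnitary.1 with hU
  have hUU' : star U * U = 1 := mem_unitaryGroup_iff'.mp hA.1.eigenvectorUnitary.2
  have h1 : U * diagonal ((↑) ∘ (√·) ∘ hA.1.eigenvalues) * star U *
      (U * diagonal ((↑) ∘ (√·) ∘ hA.1.eigenvalues) * star U)
      = U * (diagonal ((↑) ∘ (√·) ∘ hA.1.eigenvalues) * (star U * U) *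
        diagonal ((↑) ∘ (√·) ∘ hA.1.eigenvalues)) * star U := by
    simp only [Matrix.mul_assoc]
  rw [h1, hUU', mul_one, diagonal_mul_diagonal]
  conv_rhs => rw [hA.1.spectral_theorem]
  congr 3
  funext i
  simp [Real.mul_self_sqrt (hA.eigenvalues_nonneg i)]

/-- The worst-case NSNR equals `4κ(Q)/(κ(Q)+1)²`, where `κ(Q)` is
the condition number of the matrix ratio `Q = Ĉ^{-1/2} C Ĉ^{-1/2}`, and the infimum
over nonzero target vectors is attained. -/
theorem nsnrMin_eq_and_attained {D : ℕ} (hD : 0 < D)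
    (C Ch : Matrix (Fin D) (Fin D) ℝ) (hC : C.PosDef) (hCh : Ch.PosDef)
    (Q : Matrix (Fin D) (Fin D) ℝ)
    (hQdef : Q = hCh.posSemidef.sqrt⁻¹ * C * hCh.posSemidef.sqrt⁻¹)
    (hQ : Q.IsHermitian)
    (qmin qmax κ : ℝ)
    (hqmin : qmin = ⨅ i, hQ.eigenvalues i)
    (hqmax : qmax = ⨆ i, hQ.eigenvalues i)
    (hκ : κ = qmax / qmin) :
    NSNRmin C Ch = 4 * κ / (κ + 1) ^ 2 ∧
      ∃ s : Fin D → ℝ, s ≠ 0 ∧ NSNR C Ch s = NSNRmin C Ch := by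
  have : Nonempty (Fin D) := ⟨⟨0, hD⟩⟩
  set R := hCh.posSemidef.sqrt with hRdef
  have hRps : R.PosSemidef := aux_sqrt_posSemidef hCh.posSemidef
  have hRR : R * R = Ch := aux_sqrt_mul_self hCh.posSemidef
  have hdetR : IsUnit R.det := by
    have h1 : R.det * R.det = Ch.det := by rw [← det_mul, hRR]
    have h2 : Ch.det ≠ 0 := hCh.det_pos.ne'
    exact isUnit_iff_ne_zero.mpr (fun h => h2 (by rw [← h1, h, mul_zero]))
  have hRT : Rᵀ = R := by
    rw [← conjTranspose_eq_transpose_of_trivial]; exact hRps.isHermitian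
  have hRinvT : (R⁻¹)ᵀ = R⁻¹ := by rw [transpose_nonsing_inv, hRT]
  have hRRinv : R * R⁻¹ = 1 := mul_nonsing_inv R hdetR
  have hRinvR : R⁻¹ * R = 1 := nonsing_inv_mul R hdetR
  have hChinv : Ch⁻¹ = R⁻¹ * R⁻¹ := by rw [← hRR, Matrix.mul_inv_rev]
  have hQpd : Q.PosDef := by
    refine PosDef.of_dotProduct_mulVec_pos hQ fun x hx => ?_
    have hx' : R⁻¹ *ᵥ x ≠ 0 := by
      intro h
      apply hx
      have h0 : (R * R⁻¹) *ᵥ x = 0 := by rw [← mulVec_mulVec, h, mulVec_zero]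
      rwa [hRRinv, one_mulVec] at h0
    have hpos := hC.dotProduct_mulVec_pos hx'
    simp only [star_trivial] at hpos ⊢
    rw [hQdef, ← mulVec_mulVec, ← mulVec_mulVec, dotProduct_mulVec,
      vecMul_symm _ hRinvT]
    exact hpos
  have hQinvpd : Q⁻¹.PosDef := hQpd.inv
  have hQinvRCR : Q⁻¹ = R * C⁻¹ * R := by
    rw [hQdef, Matrix.mul_inv_rev, Matrix.mul_inv_rev,
      nonsing_inv_nonsing_inv R hdetR, mul_assoc]
  -- spectral data
  set U : Matrix (Fin D) (Fin D) ℝ := (hQ.eigenvectorUnitary : Matrix (Fin D) (Fin D) ℝ)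
    with hUdef
  set l : Fin D → ℝ := hQ.eigenvalues with hldef
  have hUU : U * star U = 1 := mem_unitaryGroup_iff.mp hQ.eigenvectorUnitary.2
  have hUU' : star U * U = 1 := mem_unitaryGroup_iff'.mp hQ.eigenvectorUnitary.2
  have hlpos : ∀ i, 0 < l i := hQpd.eigenvalues_pos
  have hspec : Q = U * diagonal l * star U := by
    have := hQ.spectral_theorem; rw [Unitary.conjStarAlgAut_apply] at this
    exact this
  have hQinvspec : Q⁻¹ = U * diagonal (fun i => (l i)⁻¹) * star U := by
    apply inv_eq_left_inv
    rw [hspec]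
    have h1 : (U * diagonal (fun i => (l i)⁻¹) * star U) * (U * diagonal l * star U)
        = U * (diagonal (fun i => (l i)⁻¹) * (star U * U) * diagonal l) * star U := by
      simp only [Matrix.mul_assoc]
    rw [h1, hUU', mul_one, diagonal_mul_diagonal]
    have h2 : (fun i => (l i)⁻¹ * l i) = fun _ => (1:ℝ) := by
      funext i; exact inv_mul_cancel₀ (hlpos i).ne'
    rw [h2, diagonal_one, mul_one, hUU]
  -- extremal eigenvalues
  obtain ⟨i₀, hi₀⟩ := Finite.exists_min l
  obtain ⟨j₀, hj₀⟩ := Finite.exists_max l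
  set m := l i₀ with hmdef
  set M := l j₀ with hMdef
  have hm : 0 < m := hlpos i₀
  have hM : 0 < M := hlpos j₀
  have hmM : m ≤ M := hi₀ j₀
  have hqmin' : qmin = m := by
    rw [hqmin]
    exact le_antisymm (ciInf_le (Finite.bddBelow_range _) i₀) (le_ciInf hi₀)
  have hqmax' : qmax = M := by
    rw [hqmax]
    exact le_antisymm (ciSup_le hj₀)
      (le_ciSup (Finite.bddAbove_range l) j₀ : l j₀ ≤ ⨆ i, l i)
  -- the closed-form value
  set v : ℝ := 4 * κ / (κ + 1) ^ 2 with hvdef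
  have hv : v = 4 * m * M / (m + M) ^ 2 := by
    rw [hvdef, hκ, hqmin', hqmax']
    field_simp
    ring
  -- reduction of NSNR to the Q-quadratic-form expression
  have hred : ∀ s : Fin D → ℝ, NSNR C Ch s =
      ((R⁻¹ *ᵥ s) ⬝ᵥ (R⁻¹ *ᵥ s)) ^ 2 /
        (((R⁻¹ *ᵥ s) ⬝ᵥ Q *ᵥ (R⁻¹ *ᵥ s)) * ((R⁻¹ *ᵥ s) ⬝ᵥ Q⁻¹ *ᵥ (R⁻¹ *ᵥ s))) := by
    intro s
    have ha : s ⬝ᵥ Ch⁻¹ *ᵥ s = (R⁻¹ *ᵥ s) ⬝ᵥ (R⁻¹ *ᵥ s) := by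
      rw [hChinv, ← mulVec_mulVec, dotProduct_mulVec, vecMul_symm _ hRinvT]
    have hb : s ⬝ᵥ (Ch⁻¹ * C * Ch⁻¹) *ᵥ s = (R⁻¹ *ᵥ s) ⬝ᵥ Q *ᵥ (R⁻¹ *ᵥ s) := by
      have hmat : Ch⁻¹ * C * Ch⁻¹ = R⁻¹ * (Q * R⁻¹) := by
        rw [hChinv, hQdef]; simp only [Matrix.mul_assoc]
      rw [hmat, ← mulVec_mulVec, dotProduct_mulVec, vecMul_symm _ hRinvT, mulVec_mulVec]
    have hc : s ⬝ᵥ C⁻¹ *ᵥ s = (R⁻¹ *ᵥ s) ⬝ᵥ Q⁻¹ *ᵥ (R⁻¹ *ᵥ s) := by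
      have hmm : (R * C⁻¹ * R) * R⁻¹ = R * C⁻¹ := by rw [mul_assoc, hRRinv, mul_one]
      have h1 : (R * C⁻¹ * R) *ᵥ (R⁻¹ *ᵥ s) = R *ᵥ (C⁻¹ *ᵥ s) := by
        rw [mulVec_mulVec, hmm, ← mulVec_mulVec]
      have h2 : (R⁻¹ *ᵥ s) ⬝ᵥ Q⁻¹ *ᵥ (R⁻¹ *ᵥ s) = s ⬝ᵥ C⁻¹ *ᵥ s := by
        rw [hQinvRCR, h1, dotProduct_mulVec, vecMul_symm _ hRT, mulVec_mulVec,
          hRRinv, one_mulVec]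
      exact h2.symm
    rw [NSNR, ha, hb, hc]
  -- uniform lower bound
  have hlow : ∀ t : Fin D → ℝ, t ≠ 0 →
      v ≤ (t ⬝ᵥ t) ^ 2 / ((t ⬝ᵥ Q *ᵥ t) * (t ⬝ᵥ Q⁻¹ *ᵥ t)) := by
    intro t ht
    have hApos : 0 < t ⬝ᵥ Q *ᵥ t := by
      have := hQpd.dotProduct_mulVec_pos ht; simpa using this
    have hBpos : 0 < t ⬝ᵥ Q⁻¹ *ᵥ t := by
      have := hQinvpd.dotProduct_mulVec_pos ht; simpa using this
    have hSpos : 0 < t ⬝ᵥ t := by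
      obtain ⟨i, hi⟩ := Function.ne_iff.mp ht
      have h0 : t ⬝ᵥ t = ∑ j, t j ^ 2 := by
        simp [dotProduct, sq]
      rw [h0]
      exact Finset.sum_pos' (fun j _ => sq_nonneg _)
        ⟨i, Finset.mem_univ i, (sq_nonneg (t i)).lt_of_ne (Ne.symm (pow_ne_zero 2 hi))⟩
    set c : Fin D → ℝ := star U *ᵥ t with hcdef
    have hAeq : t ⬝ᵥ Q *ᵥ t = ∑ i, l i * c i ^ 2 := by
      rw [hspec, quadForm_conj_diag]
    have hBeq : t ⬝ᵥ Q⁻¹ *ᵥ t = ∑ i, (l i)⁻¹ * c i ^ 2 := by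
      rw [hQinvspec, quadForm_conj_diag]
    have hSeq : t ⬝ᵥ t = ∑ i, c i ^ 2 := dot_self_conj U hUU t
    have hkant := kantorovich_aux l (fun i => c i ^ 2) m M hm hM
      (fun i => sq_nonneg _) hi₀ hj₀
    rw [← hAeq, ← hBeq, ← hSeq] at hkant
    rw [hv, div_le_div_iff₀ (by positivity) (mul_pos hApos hBpos)]
    have h4 : 0 < 4 * m * M := by positivity
    calc 4 * m * M * ((t ⬝ᵥ Q *ᵥ t) * (t ⬝ᵥ Q⁻¹ *ᵥ t))
        ≤ 4 * m * M * ((t ⬝ᵥ t) ^ 2 * (m + M) ^ 2 / (4 * m * M)) :=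
          mul_le_mul_of_nonneg_left hkant h4.le
      _ = (t ⬝ᵥ t) ^ 2 * (m + M) ^ 2 := by field_simp
  -- attaining vector in t-coordinates
  obtain ⟨t₀, ht₀ne, ht₀val⟩ :
      ∃ t : Fin D → ℝ, t ≠ 0 ∧
        (t ⬝ᵥ t) ^ 2 / ((t ⬝ᵥ Q *ᵥ t) * (t ⬝ᵥ Q⁻¹ *ᵥ t)) = v := by
    rcases eq_or_ne i₀ j₀ with hij | hij
    · -- degenerate: m = M
      have hmM' : m = M := by rw [hmdef, hMdef, hij]
      refine ⟨U *ᵥ Pi.single i₀ 1, ?_, ?_⟩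
      · intro h
        have h1 : star U *ᵥ (U *ᵥ (Pi.single i₀ 1 : Fin D → ℝ)) = 0 := by
          rw [h, mulVec_zero]
        rw [mulVec_mulVec, hUU', one_mulVec] at h1
        exact one_ne_zero (congrFun h1 i₀ |>.symm.trans (by simp) |>.symm.trans (by simp))
      · have hcc : star U *ᵥ (U *ᵥ (Pi.single i₀ 1 : Fin D → ℝ)) = Pi.single i₀ 1 := by
          rw [mulVec_mulVec, hUU', one_mulVec]
        have hA : (U *ᵥ (Pi.single i₀ 1 : Fin D → ℝ)) ⬝ᵥ Q *ᵥ (U *ᵥ (Pi.single i₀ 1 : Fin D → ℝ)) = m := by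
          rw [hspec, quadForm_conj_diag, hcc, sum_single_sq]
        have hB : (U *ᵥ (Pi.single i₀ 1 : Fin D → ℝ)) ⬝ᵥ Q⁻¹ *ᵥ (U *ᵥ (Pi.single i₀ 1 : Fin D → ℝ)) = m⁻¹ := by
          rw [hQinvspec, quadForm_conj_diag, hcc, sum_single_sq]
        have hS : (U *ᵥ (Pi.single i₀ 1 : Fin D → ℝ)) ⬝ᵥ (U *ᵥ (Pi.single i₀ 1 : Fin D → ℝ)) = 1 := by
          rw [dot_self_conj U hUU, hcc]
          have := sum_single_sq (fun _ : Fin D => (1:ℝ)) i₀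
          simpa using this
        rw [hA, hB, hS, hv, ← hmM']
        field_simp
        ring
    · -- generic: use sum of two eigenvector coordinates
      set e : Fin D → ℝ := Pi.single i₀ 1 + Pi.single j₀ 1 with hedef
      have hene : e ≠ 0 := by
        intro h
        have h1 : e i₀ = 0 := by rw [h]; rfl
        rw [hedef] at h1
        simp [Pi.single_apply, hij] at h1
      refine ⟨U *ᵥ e, ?_, ?_⟩
      · intro h
        have h1 : star U *ᵥ (U *ᵥ e) = 0 := by rw [h, mulVec_zero]
        rw [mulVec_mulVec, hUU', one_mulVec] at h1
        exact hene h1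
      · have hcc : star U *ᵥ (U *ᵥ e) = e := by
          rw [mulVec_mulVec, hUU', one_mulVec]
        have hA : (U *ᵥ e) ⬝ᵥ Q *ᵥ (U *ᵥ e) = m + M := by
          rw [hspec, quadForm_conj_diag, hcc, hedef, sum_two_sq _ hij]
        have hB : (U *ᵥ e) ⬝ᵥ Q⁻¹ *ᵥ (U *ᵥ e) = m⁻¹ + M⁻¹ := by
          rw [hQinvspec, quadForm_conj_diag, hcc, hedef, sum_two_sq _ hij]
        have hS : (U *ᵥ e) ⬝ᵥ (U *ᵥ e) = 2 := by
          rw [dot_self_conj U hUU, hcc, hedef]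
          have h2 := sum_two_sq (fun _ : Fin D => (1:ℝ)) hij
          rw [show (2:ℝ) = 1 + 1 by norm_num]
          simpa using h2
        rw [hA, hB, hS, hv]
        rw [div_eq_div_iff (by positivity) (by positivity)]
        field_simp
        ring
  -- back to s-coordinates
  set s₀ : Fin D → ℝ := R *ᵥ t₀ with hs₀def
  have hs₀t : R⁻¹ *ᵥ s₀ = t₀ := by
    rw [hs₀def, mulVec_mulVec, hRinvR, one_mulVec]
  have hs₀ne : s₀ ≠ 0 := by
    intro h
    apply ht₀ne
    rw [← hs₀t, h, mulVec_zero]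
  have hs₀val : NSNR C Ch s₀ = v := by rw [hred, hs₀t, ht₀val]
  have hlows : ∀ s : Fin D → ℝ, s ≠ 0 → v ≤ NSNR C Ch s := by
    intro s hs
    have hts : R⁻¹ *ᵥ s ≠ 0 := by
      intro h
      apply hs
      have h0 : (R * R⁻¹) *ᵥ s = 0 := by rw [← mulVec_mulVec, h, mulVec_zero]
      rwa [hRRinv, one_mulVec] at h0
    rw [hred]
    exact hlow _ hts
  -- conclude via the conditionally complete infimum
  have hne : Nonempty {s : Fin D → ℝ // s ≠ 0} := ⟨⟨s₀, hs₀ne⟩⟩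
  have hbdd : BddBelow (Set.range fun s : {s : Fin D → ℝ // s ≠ 0} => NSNR C Ch s.1) := by
    refine ⟨v, ?_⟩
    rintro x ⟨s, rfl⟩
    exact hlows s.1 s.2
  have hmin : NSNRmin C Ch = v := by
    refine le_antisymm ?_ ?_
    · rw [← hs₀val]
      exact ciInf_le hbdd ⟨s₀, hs₀ne⟩
    · exact le_ciInf fun s => hlows s.1 s.2
  exact ⟨hmin, s₀, hs₀ne, by rw [hs₀val, hmin]⟩
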